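/- Let $d > 0$ and $\gamma > 0$ be fixed. With $\mathcal{W}_N = \frac{\log N}{8 \log\log N}$, $w_N = \frac{\gamma \mathcal{W}_N}{2}$, $\mathcal{T}_N = \frac{16(\log\log N)^2}{\gamma \log N}$, $f_N$ and $g_N$ as in the birth-death process formulas, we have $\lim_{N \to \infty} (1-f_N)\, g_N^{\mathcal{W}_N} = 1$. -/

import Mathlib

open Real Filter

noncomputable def llog (N : ℕ) : ℝ := Real.log (Real.log N)
noncomputable def Wc (N : ℕ) : ℝ := Real.log N / (8 * llog N)
noncomputable def Tc (γ : ℝ) (N : ℕ) : ℝ := 16 * (llog N) ^ 2 / (γ * Real.log N)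
noncomputable def wc (γ : ℝ) (N : ℕ) : ℝ := γ * Wc N / 2
noncomputable def fc (d γ : ℝ) (N : ℕ) : ℝ :=
  d * (Real.exp ((wc γ N - d) * Tc γ N) - 1) /
    (wc γ N * Real.exp ((wc γ N - d) * Tc γ N) - d)
noncomputable def gc (d γ : ℝ) (N : ℕ) : ℝ :=
  wc γ N * (Real.exp ((wc γ N - d) * Tc γ N) - 1) /
    (wc γ N * Real.exp ((wc γ N - d) * Tc γ N) - d)

/-!
Write `L = log N` and `ℓ = log L`. Then `w_N 𝒯_N = ℓ` and `d 𝒯_N → 0`, so for large `N` the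
process is supercritical and `E = exp ((w_N - d) 𝒯_N) = L e^{-d 𝒯_N} → ∞`. In the supercritical
regime `0 ≤ f_N ≤ d / (w_N - d) → 0` and `0 ≤ 1 - g_N ≤ 1 / E`, so
`𝒲_N (1 - g_N) ≤ e^{d 𝒯_N} / (8 ℓ) → 0`; since `|log (1 - x)| ≤ 2 |x|` for small `x`,
`𝒲_N log g_N → 0` as well.
-/

open Topology

section BirthDeath

variable {d w E : ℝ}

-- `E` stands for `exp ((w - d) * t)` with `t ≥ 0`, so `1 ≤ E` in the supercritical case `d < w`.
lemma birthDeath_extinction_mem_Icc (hd : 0 ≤ d) (hdw : d < w) (hE : 1 ≤ E) :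
    d * (E - 1) / (w * E - d) ∈ Set.Icc 0 (d / (w - d)) := by
  have hwd : 0 < w - d := sub_pos.mpr hdw
  have hden : (w - d) * E ≤ w * E - d := by nlinarith
  refine ⟨div_nonneg (by nlinarith) (by nlinarith), ?_⟩
  rw [div_le_div_iff₀ (by nlinarith) hwd]
  nlinarith [mul_le_mul_of_nonneg_left hden hd]

lemma one_sub_birthDeath_ratio_mem_Icc (hd : 0 ≤ d) (hdw : d < w) (hE : 1 ≤ E) :
    1 - w * (E - 1) / (w * E - d) ∈ Set.Icc 0 E⁻¹ := by
  have hden : 0 < w * E - d := by nlinarith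
  have hsimp : 1 - w * (E - 1) / (w * E - d) = (w - d) / (w * E - d) := by
    field_simp
    ring
  rw [hsimp]
  refine ⟨div_nonneg (by linarith) hden.le, ?_⟩
  rw [div_le_iff₀ hden, inv_mul_eq_div, le_div_iff₀ (by linarith)]
  nlinarith

end BirthDeath

lemma tendsto_mul_log_one_sub {α : Type*} {l : Filter α} {W x : α → ℝ}
    (hx : Tendsto x l (𝓝 0)) (hWx : Tendsto (fun a => W a * x a) l (𝓝 0)) :
    Tendsto (fun a => W a * log (1 - x a)) l (𝓝 0) := by
  refine squeeze_zero_norm' ?_ (by simpa using hWx.norm.const_mul 2)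
  filter_upwards [hx.eventually (Metric.closedBall_mem_nhds 0 one_half_pos)] with a ha
  rw [dist_zero_right, Real.norm_eq_abs] at ha
  have hlog : |log (1 - x a)| ≤ 2 * |x a| := by
    have h := abs_log_sub_add_sum_range_le (ha.trans_lt one_half_lt_one) 0
    simp only [Finset.range_zero, Finset.sum_empty, zero_add, pow_one] at h
    refine h.trans ?_
    rw [div_le_iff₀ (by linarith)]
    nlinarith [abs_nonneg (x a)]
  rw [norm_mul, Real.norm_eq_abs, Real.norm_eq_abs]
  nlinarith [abs_nonneg (W a)]

lemma tendsto_llog_atTop : Tendsto llog atTop atTop :=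
  tendsto_log_atTop.comp (tendsto_log_atTop.comp tendsto_natCast_atTop_atTop)

lemma log_natCast_eq_exp_llog : ∀ᶠ N : ℕ in atTop, log N = exp (llog N) :=
  (tendsto_log_atTop.comp tendsto_natCast_atTop_atTop).eventually_gt_atTop 0 |>.mono
    fun _ hN => (exp_log hN).symm

lemma wc_mul_Tc {γ : ℝ} (hγ : γ ≠ 0) (N : ℕ) : wc γ N * Tc γ N = llog N := by
  rcases eq_or_ne (log N) 0 with hL | hL
  · simp [wc, Wc, Tc, llog, hL]
  rcases eq_or_ne (llog N) 0 with hl | hl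
  · simp [wc, Wc, hl]
  simp only [wc, Wc, Tc]
  field_simp
  ring

lemma tendsto_wc_atTop {γ : ℝ} (hγ : 0 < γ) : Tendsto (wc γ) atTop atTop := by
  have h := ((tendsto_exp_div_pow_atTop 1).comp tendsto_llog_atTop).const_mul_atTop
    (by positivity : 0 < γ / 16)
  refine h.congr' ?_
  filter_upwards [log_natCast_eq_exp_llog] with N hN
  simp only [Function.comp_apply, wc, Wc, hN]
  ring

lemma tendsto_Tc_zero (γ : ℝ) : Tendsto (Tc γ) atTop (𝓝 0) := by
  have h := ((tendsto_pow_mul_exp_neg_atTop_nhds_zero 2).comp tendsto_llog_atTop).const_mul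
    (16 / γ)
  rw [mul_zero] at h
  refine h.congr' ?_
  filter_upwards [log_natCast_eq_exp_llog] with N hN
  simp only [Function.comp_apply, Tc, hN, exp_neg]
  field_simp

lemma eventually_Wc_nonneg : ∀ᶠ N : ℕ in atTop, 0 ≤ Wc N := by
  filter_upwards [tendsto_llog_atTop.eventually_ge_atTop 0, log_natCast_eq_exp_llog] with N hl hL
  rw [Wc, hL]
  positivity

lemma tendsto_wc_sub_mul_Tc_atTop {γ : ℝ} (hγ : γ ≠ 0) (d : ℝ) :
    Tendsto (fun N => (wc γ N - d) * Tc γ N) atTop atTop := by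
  refine (tendsto_llog_atTop.atTop_add ((tendsto_Tc_zero γ).const_mul d).neg).congr fun N => ?_
  rw [sub_mul, wc_mul_Tc hγ, sub_eq_add_neg]

lemma tendsto_Wc_mul_exp_neg {γ : ℝ} (hγ : γ ≠ 0) (d : ℝ) :
    Tendsto (fun N => Wc N * exp (-((wc γ N - d) * Tc γ N))) atTop (𝓝 0) := by
  have hWc : Tendsto (fun N => Wc N * exp (-llog N)) atTop (𝓝 0) := by
    refine (tendsto_llog_atTop.const_mul_atTop (by norm_num : (0 : ℝ) < 8)).inv_tendsto_atTop
      |>.congr' ?_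
    filter_upwards [log_natCast_eq_exp_llog] with N hN
    simp only [Pi.inv_apply, Wc, hN, exp_neg]
    field_simp
  have h := hWc.mul ((continuous_exp.tendsto _).comp ((tendsto_Tc_zero γ).const_mul d))
  rw [zero_mul] at h
  refine h.congr fun N => ?_
  rw [Function.comp_apply, sub_mul, wc_mul_Tc hγ, neg_sub, sub_eq_neg_add, exp_add, mul_assoc]

theorem stmt_4 (d γ : ℝ) (hd : 0 < d) (hγ : 0 < γ) :
    Tendsto (fun N : ℕ => (1 - fc d γ N) * Real.exp (Wc N * Real.log (gc d γ N)))
      atTop (nhds 1) := by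
  have hsuper : ∀ᶠ N in atTop, d < wc γ N ∧ 1 ≤ exp ((wc γ N - d) * Tc γ N) := by
    filter_upwards [(tendsto_wc_atTop hγ).eventually_gt_atTop d,
      (tendsto_wc_sub_mul_Tc_atTop hγ.ne' d).eventually_ge_atTop 0] with N hdw hexp
    exact ⟨hdw, one_le_exp hexp⟩
  have hf : Tendsto (fc d γ) atTop (𝓝 0) :=
    squeeze_zero' (hsuper.mono fun N h => (birthDeath_extinction_mem_Icc hd.le h.1 h.2).1)
      (hsuper.mono fun N h => (birthDeath_extinction_mem_Icc hd.le h.1 h.2).2)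
      (tendsto_const_nhds.div_atTop (tendsto_atTop_add_const_right _ (-d) (tendsto_wc_atTop hγ)))
  have hX_mem : ∀ᶠ N in atTop, 1 - gc d γ N ∈ Set.Icc 0 (exp (-((wc γ N - d) * Tc γ N))) :=
    hsuper.mono fun N h => by
      rw [exp_neg]
      exact one_sub_birthDeath_ratio_mem_Icc hd.le h.1 h.2
  have hX : Tendsto (fun N => 1 - gc d γ N) atTop (𝓝 0) :=
    squeeze_zero' (hX_mem.mono fun N h => h.1) (hX_mem.mono fun N h => h.2)
      (tendsto_exp_neg_atTop_nhds_zero.comp (tendsto_wc_sub_mul_Tc_atTop hγ.ne' d))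
  have hWX : Tendsto (fun N => Wc N * (1 - gc d γ N)) atTop (𝓝 0) :=
    squeeze_zero' (eventually_Wc_nonneg.and hX_mem |>.mono fun N h => mul_nonneg h.1 h.2.1)
      (eventually_Wc_nonneg.and hX_mem |>.mono fun N h => mul_le_mul_of_nonneg_left h.2.2 h.1)
      (tendsto_Wc_mul_exp_neg hγ.ne' d)
  have hlog := tendsto_mul_log_one_sub hX hWX
  simp only [sub_sub_cancel] at hlog
  simpa using (tendsto_const_nhds.sub hf).mul ((continuous_exp.tendsto 0).comp hlog)
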